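/- Under the assumptions of zero-residual least squares: if the Gauss–Newton step p_GN satisfies ‖χ + p_GN − χ*‖ ≤ ‖χ + p_N − χ*‖ + ‖p_N − p_GN‖, the Newton step satisfies ‖χ + p_N − χ*‖ ≤ L̂‖χ−χ*‖², ‖p_N − p_GN‖ ≤ s·q·‖p_N‖ with s = ‖B⁻¹‖ bounded, q = ‖Q(χ)‖ ≤ C‖χ−χ*‖, and ‖p_N‖ ≤ ‖χ−χ*‖ + L̂‖χ−χ*‖², then ‖χ + p_GN − χ*‖ ≤ ω₁‖χ−χ*‖ + ω₂‖χ−χ*‖² with ω₁ = s·q and ω₂ = L̂(s·q + 1); consequently there is a constant K such that ‖χ + p_GN − χ*‖ ≤ K‖χ−χ*‖² for χ sufficiently close to χ*. -/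
import Mathlib

theorem stmt_14 (n : ℕ) (Lhat s C : ℝ) (hs : 0 ≤ s) (hL : 0 ≤ Lhat) (hC : 0 ≤ C) :
    ∃ K : ℝ, ∀ (χ χstar pN pGN : EuclideanSpace ℝ (Fin n)) (q : ℝ), 0 ≤ q →
      ‖χ + pGN - χstar‖ ≤ ‖χ + pN - χstar‖ + ‖pN - pGN‖ →
      ‖χ + pN - χstar‖ ≤ Lhat * ‖χ - χstar‖ ^ 2 →
      ‖pN - pGN‖ ≤ s * q * ‖pN‖ →
      q ≤ C * ‖χ - χstar‖ →
      ‖pN‖ ≤ ‖χ - χstar‖ + Lhat * ‖χ - χstar‖ ^ 2 →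
      (‖χ + pGN - χstar‖ ≤ (s * q) * ‖χ - χstar‖ + (Lhat * (s * q + 1)) * ‖χ - χstar‖ ^ 2) ∧
      (‖χ - χstar‖ ≤ 1 → ‖χ + pGN - χstar‖ ≤ K * ‖χ - χstar‖ ^ 2) := by
  refine ⟨s * C + Lhat * (s * C + 1), fun χ χstar pN pGN q hq h1 h2 h3 h4 h5 => ?_⟩
  have hd : (0:ℝ) ≤ ‖χ - χstar‖ := norm_nonneg _
  have hpn : (0:ℝ) ≤ ‖pN‖ := norm_nonneg _
  constructor
  · nlinarith [mul_le_mul_of_nonneg_left h5 (mul_nonneg hs hq)]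
  · intro hle
    have hq' : s * q * ‖pN‖ ≤ s * (C * ‖χ - χstar‖) * ‖pN‖ :=
      mul_le_mul_of_nonneg_right (mul_le_mul_of_nonneg_left h4 hs) hpn
    have hq'' : s * (C * ‖χ - χstar‖) * ‖pN‖ ≤
        s * (C * ‖χ - χstar‖) * (‖χ - χstar‖ + Lhat * ‖χ - χstar‖ ^ 2) :=
      mul_le_mul_of_nonneg_left h5 (by positivity)
    have hd3 : ‖χ - χstar‖ ^ 3 ≤ ‖χ - χstar‖ ^ 2 :=
      pow_le_pow_of_le_one hd hle (by norm_num)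
    nlinarith [mul_nonneg (mul_nonneg hs hC) hL]
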